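/- arXiv:2309.00521 — 4 statements merged into one kernel-verified Lean document; each statement's English description precedes it below -/
import Mathlib

section
/- Let L be self-adjoint on a complex Hilbert space 𝔥 with (Lu|u) ≥ −m_*‖u‖² on D(L) (m_* ≥ 0), and B bounded skew-symmetric with ‖B‖ ≤ β. Then the spectrum of the quadratic pencil 𝔏(λ) = λ² + λB + L is contained in the set S = iℝ ∪ { λ ∈ ℂ : |λ| ≤ √m_* and |Im λ| ≤ β/2 }. -/
open scoped ComplexInnerProductSpace

variable {H : Type*} [NormedAddCommGroup H] [InnerProductSpace ℂ H] [CompleteSpace H]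

/-- `Rop` is a bounded two-sided inverse of the pencil `𝔏(λ) = λ² + λ B + L` with domain `D`. -/
def IsPencilInverse (D : Set H) (L : H →ₗ[ℂ] H) (B : H →L[ℂ] H) (lam : ℂ)
    (Rop : H →L[ℂ] H) : Prop :=
  (∀ f : H, Rop f ∈ D ∧ lam ^ 2 • Rop f + lam • B (Rop f) + L (Rop f) = f) ∧
  (∀ u ∈ D, Rop (lam ^ 2 • u + lam • B u + L u) = u)

/-- `λ` belongs to the resolvent set of the pencil. -/
def PencilResolvent (D : Set H) (L : H →ₗ[ℂ] H) (B : H →L[ℂ] H) (lam : ℂ) : Prop :=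
  ∃ Rop : H →L[ℂ] H, IsPencilInverse D L B lam Rop

/-!
For `u ∈ D`, `⟪u, 𝔏(λ) u⟫ = (λ² + i b λ + c) ‖u‖²` with real `b = Im ⟪u, B u⟫ / ‖u‖² ∈ [-β, β]`
and `c = ⟪u, L u⟫ / ‖u‖² ≥ -m_*`. When `Re λ ≠ 0` and `λ ∉ S`, these scalar quadratics stay
uniformly away from `0`, so `‖𝔏(λ) u‖ ≥ δ ‖u‖`. As `L` is closed, the range of `𝔏(λ)` is then
closed, and its orthogonal complement lies in the kernel of `𝔏(λ)* = 𝔏(-λ̄)`, which is trivial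
because `-λ̄ ∉ S` either. So `𝔏(λ)` maps `D` bijectively onto `H`, with inverse bounded by `δ⁻¹`.
-/

open Filter Topology

lemma exists_pos_le_norm_quadratic {m β : ℝ} {lam : ℂ} (hre : lam.re ≠ 0)
    (h : m < ‖lam‖ ^ 2 ∨ β / 2 < |lam.im|) :
    ∃ δ > 0, ∀ b c : ℝ, |b| ≤ β → -m ≤ c →
      δ ≤ ‖lam ^ 2 + b * Complex.I * lam + c‖ := by
  obtain ⟨x, y⟩ := lam
  simp only at hre ⊢
  have hx : 0 < |x| := abs_pos.mpr hre
  have him (b c : ℝ) : (⟨x, y⟩ ^ 2 + b * Complex.I * ⟨x, y⟩ + c : ℂ).im = x * (2 * y + b) := by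
    simp [pow_two]; ring
  have hreal (b c : ℝ) :
      (⟨x, y⟩ ^ 2 + b * Complex.I * ⟨x, y⟩ + c : ℂ).re = x ^ 2 + y ^ 2 - y * (2 * y + b) + c := by
    simp [pow_two]; ring
  rcases h with h | h
  · have hs : 0 < x ^ 2 + y ^ 2 - m := by
      rw [Complex.sq_norm, Complex.normSq_mk] at h; nlinarith
    refine ⟨|x| * (x ^ 2 + y ^ 2 - m) / (|x| + |y|), by positivity, fun b c _ hc => ?_⟩
    set p : ℂ := ⟨x, y⟩ ^ 2 + b * Complex.I * ⟨x, y⟩ + c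
    rw [div_le_iff₀ (by positivity)]
    -- the imaginary part controls the term `y (2y + b)` that could spoil the real part
    calc |x| * (x ^ 2 + y ^ 2 - m) ≤ |x| * (p.re + y * (2 * y + b)) := by
          gcongr; rw [hreal]; linarith
      _ ≤ |x| * p.re + |y| * |p.im| := by
          rw [him, abs_mul, mul_add]
          nlinarith [le_abs_self (y * (2 * y + b)), abs_mul y (2 * y + b)]
      _ ≤ ‖p‖ * (|x| + |y|) := by
          nlinarith [Complex.re_le_norm p, Complex.abs_im_le_norm p, abs_nonneg y]
  · refine ⟨|x| * (2 * |y| - β), mul_pos hx (by linarith), fun b c hb _ => ?_⟩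
    calc |x| * (2 * |y| - β) ≤ |x| * |2 * y + b| := by
          gcongr
          have := abs_sub_abs_le_abs_sub (2 * y) (-b)
          rw [abs_neg, sub_neg_eq_add, abs_mul, abs_two] at this
          linarith
      _ = |(⟨x, y⟩ ^ 2 + b * Complex.I * ⟨x, y⟩ + c : ℂ).im| := by rw [him, abs_mul]
      _ ≤ _ := Complex.abs_im_le_norm _

section

variable {E : Type*} [NormedAddCommGroup E] [InnerProductSpace ℂ E]

def IsSelfAdjointOn (D : Set E) (L : E →ₗ[ℂ] E) : Prop :=
  (∀ u ∈ D, ∀ v ∈ D, ⟪L u, v⟫ = ⟪u, L v⟫) ∧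
  ∀ v w : E, (∀ u ∈ D, ⟪L u, v⟫ = ⟪u, w⟫) → v ∈ D ∧ L v = w

namespace IsSelfAdjointOn

variable {D : Set E} {L : E →ₗ[ℂ] E}

def domain (hL : IsSelfAdjointOn D L) : Submodule ℂ E where
  carrier := D
  add_mem' {v w} hv hw := (hL.2 (v + w) (L v + L w) fun u hu => by
    rw [inner_add_right, inner_add_right, hL.1 u hu v hv, hL.1 u hu w hw]).1
  zero_mem' := (hL.2 0 0 fun u _ => by simp).1
  smul_mem' a v hv := (hL.2 (a • v) (a • L v) fun u hu => by
    rw [inner_smul_right, inner_smul_right, hL.1 u hu v hv]).1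

lemma inner_self_apply_eq_re (hL : IsSelfAdjointOn D L) {u : E} (hu : u ∈ D) :
    ⟪u, L u⟫ = (⟪u, L u⟫.re : ℂ) := by
  refine (Complex.conj_eq_iff_re.mp ?_).symm
  rw [inner_conj_symm, hL.1 u hu u hu]

lemma mem_and_apply_eq_of_tendsto (hL : IsSelfAdjointOn D L) {u : ℕ → E} {x y : E}
    (hu : ∀ n, u n ∈ D) (hx : Tendsto u atTop (𝓝 x))
    (hy : Tendsto (fun n => L (u n)) atTop (𝓝 y)) :
    x ∈ D ∧ L x = y :=
  hL.2 x y fun w hw => tendsto_nhds_unique (tendsto_const_nhds.inner hx) <| by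
    simpa only [hL.1 w hw _ (hu _)] using tendsto_const_nhds.inner hy

end IsSelfAdjointOn

lemma re_inner_self_apply_eq_zero {B : E →L[ℂ] E} (hB : ∀ v w : E, ⟪B v, w⟫ = -⟪v, B w⟫)
    (u : E) :
    ⟪u, B u⟫.re = 0 := by
  have := congrArg Complex.re (hB u u)
  rw [← inner_conj_symm, Complex.conj_re, Complex.neg_re] at this
  linarith

def pencil (L : E →ₗ[ℂ] E) (B : E →L[ℂ] E) (lam : ℂ) : E →ₗ[ℂ] E :=
  lam ^ 2 • LinearMap.id + lam • (B : E →ₗ[ℂ] E) + L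

@[simp] lemma pencil_apply (L : E →ₗ[ℂ] E) (B : E →L[ℂ] E) (lam : ℂ) (u : E) :
    pencil L B lam u = lam ^ 2 • u + lam • B u + L u := rfl

variable {D : Set E} {L : E →ₗ[ℂ] E} {B : E →L[ℂ] E} {m β : ℝ} {lam : ℂ}

lemma exists_inner_pencil_self_eq (hL : IsSelfAdjointOn D L)
    (hlb : ∀ u ∈ D, -m * ‖u‖ ^ 2 ≤ (⟪L u, u⟫).re) (hskew : ∀ v w : E, ⟪B v, w⟫ = -⟪v, B w⟫)
    (hB : ‖B‖ ≤ β) {u : E} (hu : u ∈ D) (hu0 : u ≠ 0) :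
    ∃ b c : ℝ, |b| ≤ β ∧ -m ≤ c ∧
      ⟪u, pencil L B lam u⟫ = (lam ^ 2 + b * Complex.I * lam + c) * (‖u‖ : ℂ) ^ 2 := by
  obtain ⟨b, hBu⟩ : ∃ b : ℝ, ⟪u, B u⟫ = b * Complex.I :=
    ⟨⟪u, B u⟫.im, Complex.ext (by simp [re_inner_self_apply_eq_zero hskew]) (by simp)⟩
  obtain ⟨c, hLu⟩ : ∃ c : ℝ, ⟪u, L u⟫ = c := ⟨_, hL.inner_self_apply_eq_re hu⟩
  have hb : |b| ≤ β * ‖u‖ ^ 2 :=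
    calc |b| = ‖⟪u, B u⟫‖ := by simp [hBu]
      _ ≤ ‖u‖ * ‖B u‖ := norm_inner_le_norm _ _
      _ ≤ ‖u‖ * (β * ‖u‖) := by gcongr; exact B.le_of_opNorm_le hB u
      _ = β * ‖u‖ ^ 2 := by ring
  have hc : -m * ‖u‖ ^ 2 ≤ c := by
    have := hlb u hu
    rwa [← inner_conj_symm, hLu, Complex.conj_ofReal, Complex.ofReal_re] at this
  have hn : 0 < ‖u‖ ^ 2 := by positivity
  refine ⟨b / ‖u‖ ^ 2, c / ‖u‖ ^ 2, ?_, ?_, ?_⟩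
  · rwa [abs_div, abs_of_pos hn, div_le_iff₀ hn]
  · rwa [le_div_iff₀ hn]
  · rw [pencil_apply, inner_add_right, inner_add_right, inner_smul_right, inner_smul_right,
      inner_self_eq_norm_sq_to_K, RCLike.ofReal_eq_complex_ofReal, hBu, hLu]
    have : (‖u‖ : ℂ) ≠ 0 := by exact_mod_cast norm_ne_zero_iff.mpr hu0
    push_cast
    field_simp

lemma le_norm_pencil (hL : IsSelfAdjointOn D L)
    (hlb : ∀ u ∈ D, -m * ‖u‖ ^ 2 ≤ (⟪L u, u⟫).re) (hskew : ∀ v w : E, ⟪B v, w⟫ = -⟪v, B w⟫)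
    (hB : ‖B‖ ≤ β) {δ : ℝ}
    (hδ : ∀ b c : ℝ, |b| ≤ β → -m ≤ c → δ ≤ ‖lam ^ 2 + b * Complex.I * lam + c‖)
    {u : E} (hu : u ∈ D) : δ * ‖u‖ ≤ ‖pencil L B lam u‖ := by
  rcases eq_or_ne u 0 with rfl | hu0
  · simp
  obtain ⟨b, c, hb, hc, heq⟩ := exists_inner_pencil_self_eq (lam := lam) hL hlb hskew hB hu hu0
  have hcs := norm_inner_le_norm (𝕜 := ℂ) u (pencil L B lam u)
  rw [heq, norm_mul, norm_pow, Complex.norm_real, norm_norm] at hcs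
  have hn : 0 < ‖u‖ := norm_pos_iff.mpr hu0
  nlinarith [hδ b c hb hc]

lemma isClosed_image_pencil [CompleteSpace E] (hL : IsSelfAdjointOn D L) {δ : ℝ} (hδ : 0 < δ)
    (hbdd : ∀ u ∈ D, δ * ‖u‖ ≤ ‖pencil L B lam u‖) : IsClosed (pencil L B lam '' D) := by
  refine isClosed_of_closure_subset fun f hf => ?_
  obtain ⟨g, hgD, hg⟩ := mem_closure_iff_seq_limit.mp hf
  choose v hvD hvg using hgD
  have hv : CauchySeq v := by
    refine Metric.cauchySeq_iff.mpr fun ε hε => ?_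
    obtain ⟨N, hN⟩ := Metric.cauchySeq_iff.mp hg.cauchySeq (δ * ε) (by positivity)
    refine ⟨N, fun i hi j hj => ?_⟩
    have := hbdd _ (hL.domain.sub_mem (hvD i) (hvD j))
    rw [map_sub, hvg, hvg, ← dist_eq_norm, ← dist_eq_norm] at this
    have := hN i hi j hj
    nlinarith
  obtain ⟨x, hx⟩ := cauchySeq_tendsto_of_complete hv
  have hLv : Tendsto (fun n => L (v n)) atTop (𝓝 (f - lam ^ 2 • x - lam • B x)) := by
    have hLv (n : ℕ) : L (v n) = g n - lam ^ 2 • v n - lam • B (v n) := by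
      rw [← hvg n, pencil_apply]; abel
    simp only [hLv]
    exact (hg.sub (hx.const_smul _)).sub (((B.continuous.tendsto x).comp hx).const_smul _)
  obtain ⟨hxD, hLx⟩ := hL.mem_and_apply_eq_of_tendsto hvD hx hLv
  exact ⟨x, hxD, by rw [pencil_apply, hLx]; abel⟩

lemma IsSelfAdjointOn.pencil_neg_conj_eq_zero_of_orthogonal (hL : IsSelfAdjointOn D L)
    (hskew : ∀ v w : E, ⟪B v, w⟫ = -⟪v, B w⟫) {f : E}
    (hf : ∀ u ∈ D, ⟪pencil L B lam u, f⟫ = 0) :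
    f ∈ D ∧ pencil L B (-(starRingEnd ℂ) lam) f = 0 := by
  have hLf : ∀ u ∈ D, ⟪L u, f⟫ =
      ⟪u, -(starRingEnd ℂ) lam ^ 2 • f + (starRingEnd ℂ) lam • B f⟫ := by
    intro u hu
    have := hf u hu
    rw [pencil_apply, inner_add_left, inner_add_left, inner_smul_left, inner_smul_left,
      hskew, map_pow] at this
    rw [inner_add_right, inner_smul_right, inner_smul_right]
    linear_combination this
  obtain ⟨hfD, hLf⟩ := hL.2 _ _ hLf
  refine ⟨hfD, ?_⟩
  rw [pencil_apply, hLf]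
  module

lemma eq_zero_of_pencil_eq_zero {δ : ℝ} (hδ : 0 < δ)
    (hbdd : ∀ u ∈ D, δ * ‖u‖ ≤ ‖pencil L B lam u‖) {u : E} (hu : u ∈ D)
    (h0 : pencil L B lam u = 0) : u = 0 := by
  have := hbdd u hu
  rw [h0, norm_zero] at this
  exact norm_le_zero_iff.mp (nonpos_of_mul_nonpos_right this hδ)

lemma pencilResolvent_of_surjective [CompleteSpace E] (hL : IsSelfAdjointOn D L) {δ : ℝ}
    (hδ : 0 < δ) (hbdd : ∀ u ∈ D, δ * ‖u‖ ≤ ‖pencil L B lam u‖)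
    (hsurj : ∀ f, ∃ u ∈ D, pencil L B lam u = f) : PencilResolvent D L B lam := by
  set T := (pencil L B lam).domRestrict hL.domain
  have hT_inj : Function.Injective T := by
    refine (injective_iff_map_eq_zero T).mpr fun u hu => ?_
    exact Subtype.ext (eq_zero_of_pencil_eq_zero hδ hbdd u.2 hu)
  have hT_surj : Function.Surjective T := fun f => by
    obtain ⟨u, hu, rfl⟩ := hsurj f
    exact ⟨⟨u, hu⟩, rfl⟩
  set e := LinearEquiv.ofBijective T ⟨hT_inj, hT_surj⟩
  have hpencil_symm (f : E) : pencil L B lam (e.symm f) = f := e.apply_symm_apply f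
  have hbound (f : E) : ‖(e.symm f : E)‖ ≤ δ⁻¹ * ‖f‖ := by
    have := hbdd _ (e.symm f).2
    rw [hpencil_symm] at this
    rw [inv_mul_eq_div, le_div_iff₀ hδ, mul_comm]
    exact this
  exact ⟨(hL.domain.subtype ∘ₗ e.symm.toLinearMap).mkContinuous δ⁻¹ hbound,
    fun f => ⟨(e.symm f).2, hpencil_symm f⟩,
    fun u hu => congrArg Subtype.val (e.symm_apply_apply ⟨u, hu⟩)⟩

lemma pencilResolvent_of_le_norm_pencil [CompleteSpace E] (hL : IsSelfAdjointOn D L)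
    (hskew : ∀ v w : E, ⟪B v, w⟫ = -⟪v, B w⟫) {δ₁ δ₂ : ℝ} (hδ₁ : 0 < δ₁) (hδ₂ : 0 < δ₂)
    (h₁ : ∀ u ∈ D, δ₁ * ‖u‖ ≤ ‖pencil L B lam u‖)
    (h₂ : ∀ u ∈ D, δ₂ * ‖u‖ ≤ ‖pencil L B (-(starRingEnd ℂ) lam) u‖) :
    PencilResolvent D L B lam := by
  set R := hL.domain.map (pencil L B lam)
  have hR_closed : IsClosed (R : Set E) := by
    rw [Submodule.map_coe]
    exact isClosed_image_pencil hL hδ₁ h₁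
  have hR_orth : Rᗮ = ⊥ := by
    refine (Submodule.eq_bot_iff _).mpr fun f hf => ?_
    obtain ⟨hfD, hf0⟩ := hL.pencil_neg_conj_eq_zero_of_orthogonal hskew fun u hu =>
      Submodule.inner_right_of_mem_orthogonal (Submodule.mem_map_of_mem hu) hf
    exact eq_zero_of_pencil_eq_zero hδ₂ h₂ hfD hf0
  have hR_top : R = ⊤ := by
    rw [← hR_closed.submodule_topologicalClosure_eq, ← Submodule.orthogonal_orthogonal_eq_closure,
      hR_orth, Submodule.bot_orthogonal_eq_top]
  refine pencilResolvent_of_surjective hL hδ₁ h₁ fun f => ?_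
  obtain ⟨u, hu, rfl⟩ : f ∈ R := hR_top ▸ Submodule.mem_top
  exact ⟨u, hu, rfl⟩

end

theorem stmt8_general (D : Set H) (L : H →ₗ[ℂ] H) (B : H →L[ℂ] H) (mstar β : ℝ)
    (hsym : ∀ u ∈ D, ∀ v ∈ D, ⟪L u, v⟫ = ⟪u, L v⟫)
    (hSA : ∀ v w : H, (∀ u ∈ D, ⟪L u, v⟫ = ⟪u, w⟫) → v ∈ D ∧ L v = w)
    (hlb : ∀ u ∈ D, -mstar * ‖u‖ ^ 2 ≤ (⟪L u, u⟫).re)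
    (hskew : ∀ v w : H, ⟪B v, w⟫ = -⟪v, B w⟫)
    (hB : ‖B‖ ≤ β)
    (lam : ℂ) (hlam : ¬ PencilResolvent D L B lam) :
    lam.re = 0 ∨ (‖lam‖ ≤ Real.sqrt mstar ∧ |lam.im| ≤ β / 2) := by
  by_contra hS
  push Not at hS
  obtain ⟨hre, hout⟩ := hS
  have hout' : mstar < ‖lam‖ ^ 2 ∨ β / 2 < |lam.im| := by
    by_cases h : ‖lam‖ ≤ Real.sqrt mstar
    · exact .inr (hout h)
    · push Not at h
      exact .inl ((Real.sqrt_lt' ((Real.sqrt_nonneg _).trans_lt h)).mp h)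
  have hL : IsSelfAdjointOn D L := ⟨hsym, hSA⟩
  obtain ⟨δ₁, hδ₁, h₁⟩ := exists_pos_le_norm_quadratic hre hout'
  obtain ⟨δ₂, hδ₂, h₂⟩ := exists_pos_le_norm_quadratic (lam := -(starRingEnd ℂ) lam)
    (by simpa using hre) (by simpa using hout')
  exact hlam <| pencilResolvent_of_le_norm_pencil hL hskew hδ₁ hδ₂
    (fun _ hu => le_norm_pencil hL hlb hskew hB h₁ hu)
    (fun _ hu => le_norm_pencil hL hlb hskew hB h₂ hu)

/-- for `L` self-adjoint with `(Lu|u) ≥ −m_*‖u‖²` (`m_* ≥ 0`) and `B` bounded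
skew-symmetric with `‖B‖ ≤ β`, the spectrum of the pencil `𝔏(λ) = λ² + λB + L` is contained
in `S = iℝ ∪ {λ : |λ| ≤ √m_* and |Im λ| ≤ β/2}`. -/
theorem stmt8 (D : Set H) (L : H →ₗ[ℂ] H) (B : H →L[ℂ] H) (mstar β : ℝ)
    (hmstar : 0 ≤ mstar)
    (hsym : ∀ u ∈ D, ∀ v ∈ D, ⟪L u, v⟫ = ⟪u, L v⟫)
    (hSA : ∀ v w : H, (∀ u ∈ D, ⟪L u, v⟫ = ⟪u, w⟫) → v ∈ D ∧ L v = w)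
    (hlb : ∀ u ∈ D, -mstar * ‖u‖ ^ 2 ≤ (⟪L u, u⟫).re)
    (hskew : ∀ v w : H, ⟪B v, w⟫ = -⟪v, B w⟫)
    (hB : ‖B‖ ≤ β)
    (lam : ℂ) (hlam : ¬ PencilResolvent D L B lam) :
    lam.re = 0 ∨ (‖lam‖ ≤ Real.sqrt mstar ∧ |lam.im| ≤ β / 2) :=
  stmt8_general D L B mstar β hsym hSA hlb hskew hB lam hlam
end

section
/- Let 0 < R < ∞ and ρ : [0,R] → (0, ρ_O] continuous with ρ(r) > 0 for r < R. Define μ = inf over the class F of ψ ∈ C¹[0,R] with ψ(R) = 0 and |ψ| ≤ M (for a fixed M > 0), ψ ≢ 0, of the Rayleigh quotient [∫₀ᴿ (1/ρ)|ψ'(r)|² r² dr] / [∫₀ᴿ |ψ(r)|² r² dr]. Then μ > 0. -/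
open MeasureTheory Set intervalIntegral

/-!
The Rayleigh quotient is bounded below by the explicit constant `6 / (ρ_O R²)`. Since `ψ(R) = 0`,
`ψ(r) = -∫ᵣᴿ ψ'`, and the weighted Cauchy–Schwarz inequality
`(∫ᵣᴿ |ψ'|)² ≤ (∫ᵣᴿ |ψ'|² s² / ρ) (∫ᵣᴿ ρ / s²)` gives the Hardy-type bound
`|ψ(r)|² ≤ N ρ_O (1/r - 1/R)`, where `N` is the numerator of the quotient. Multiplying by `r²` and
integrating over `[0, R]` bounds the denominator by `N ρ_O R² / 6`.
-/

section RayleighQuotient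

variable {E : Type*} [NormedAddCommGroup E] [NormedSpace ℝ E]

noncomputable def weightedDirichletEnergy (ρ : ℝ → ℝ) (R : ℝ) (ψ : ℝ → E) : ℝ :=
  ∫ r in (0 : ℝ)..R, (1 / ρ r) * ‖derivWithin ψ (Icc 0 R) r‖ ^ 2 * r ^ 2

noncomputable def radialMass (R : ℝ) (ψ : ℝ → E) : ℝ :=
  ∫ r in (0 : ℝ)..R, ‖ψ r‖ ^ 2 * r ^ 2

noncomputable def rayleighQuotients (R M : ℝ) (ρ : ℝ → ℝ) : Set ℝ :=
  {q | ∃ ψ : ℝ → ℂ, ContDiffOn ℝ 1 ψ (Icc 0 R) ∧ ψ R = 0 ∧ (∀ r ∈ Icc (0 : ℝ) R, ‖ψ r‖ ≤ M) ∧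
    radialMass R ψ ≠ 0 ∧ q = weightedDirichletEnergy ρ R ψ / radialMass R ψ}

end RayleighQuotient

/-- The optimisation step of Cauchy–Schwarz: minimise `t N + B / t` over `t > 0`. -/
lemma sq_le_mul_of_forall_two_mul_le {x N B : ℝ} (hx : 0 ≤ x) (hN : 0 ≤ N) (hB : 0 ≤ B)
    (h : ∀ t : ℝ, 0 < t → 2 * x ≤ t * N + B / t) : x ^ 2 ≤ N * B := by
  rcases hx.eq_or_lt with rfl | hx
  · simpa using mul_nonneg hN hB
  rcases hN.eq_or_lt with rfl | hN
  · have ht := h ((B + x) / x) (by positivity)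
    rw [mul_zero, zero_add, div_div_eq_mul_div, le_div_iff₀ (by positivity)] at ht
    nlinarith
  · have ht := h (x / N) (by positivity)
    rw [div_mul_cancel₀ x hN.ne', div_div_eq_mul_div] at ht
    have hxB : x * x ≤ B * N := (le_div_iff₀ hx).1 (by linarith)
    nlinarith

lemma two_mul_le_mul_add_div {a s w W t : ℝ} (hs : 0 < s) (hw : 0 < w) (hwW : w ≤ W)
    (ht : 0 < t) : 2 * a ≤ t * (1 / w * a ^ 2 * s ^ 2) + W / s ^ 2 / t := by
  have hsq : 2 * a ≤ t * (1 / w * a ^ 2 * s ^ 2) + w / s ^ 2 / t := by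
    have hdiff : t * (1 / w * a ^ 2 * s ^ 2) + w / s ^ 2 / t - 2 * a
        = (t * s ^ 2 * a - w) ^ 2 / (t * w * s ^ 2) := by
      field_simp
      ring
    have : 0 ≤ (t * s ^ 2 * a - w) ^ 2 / (t * w * s ^ 2) := by positivity
    linarith
  have : w / s ^ 2 / t ≤ W / s ^ 2 / t := by gcongr
  linarith

lemma integral_const_div_sq {r R : ℝ} (hr : 0 < r) (hrR : r ≤ R) (W : ℝ) :
    ∫ s in r..R, W / s ^ 2 = W * (1 / r - 1 / R) := by
  have hderiv : ∀ x ∈ uIcc r R, HasDerivAt (fun s : ℝ => -(W * s⁻¹)) (W / x ^ 2) x := by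
    intro x hx
    rw [uIcc_of_le hrR] at hx
    exact ((hasDerivAt_inv (hr.trans_le hx.1).ne').const_mul W).neg.congr_deriv (by ring)
  have hint : IntervalIntegrable (fun s : ℝ => W / s ^ 2) volume r R := by
    refine ContinuousOn.intervalIntegrable (continuousOn_const.div (continuousOn_pow 2) ?_)
    rw [uIcc_of_le hrR]
    exact fun s hs => pow_ne_zero 2 (hr.trans_le hs.1).ne'
  rw [integral_eq_sub_of_hasDerivAt hderiv hint]
  ring

section Hardy

variable {E : Type*} [NormedAddCommGroup E] [NormedSpace ℝ E] [CompleteSpace E]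

/-- Weighted Cauchy–Schwarz for `ψ(r) = -∫ᵣᴿ ψ'` against the weight `w(s) / s²`. -/
theorem norm_sq_le_integral_mul_of_eq_zero {ψ g : ℝ → E} {w : ℝ → ℝ} {r R W : ℝ}
    (hr : 0 < r) (hrR : r ≤ R) (hψ : ContinuousOn ψ (Icc r R))
    (hderiv : ∀ x ∈ Ioo r R, HasDerivAt ψ (g x) x) (hg : ContinuousOn g (Icc r R))
    (hwc : ContinuousOn w (Icc r R)) (hw : ∀ s ∈ Icc r R, 0 < w s ∧ w s ≤ W)
    (hψR : ψ R = 0) :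
    ‖ψ r‖ ^ 2 ≤ (∫ s in r..R, 1 / w s * ‖g s‖ ^ 2 * s ^ 2) * (W * (1 / r - 1 / R)) := by
  have hpos : ∀ s ∈ Icc r R, 0 < s := fun s hs => hr.trans_le hs.1
  have hW : 0 ≤ W := (hw r ⟨le_rfl, hrR⟩).1.le.trans (hw r ⟨le_rfl, hrR⟩).2
  set F := fun s => 1 / w s * ‖g s‖ ^ 2 * s ^ 2
  have hFc : ContinuousOn F (Icc r R) :=
    ((continuousOn_const.div hwc fun s hs => (hw s hs).1.ne').mul (hg.norm.pow 2)).mul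
      (continuousOn_pow 2)
  have hFint : IntervalIntegrable F volume r R := hFc.intervalIntegrable_of_Icc hrR
  have hF : 0 ≤ ∫ s in r..R, F s :=
    integral_nonneg hrR fun s hs => by have := (hw s hs).1; positivity
  have hftc : ∫ s in r..R, g s = ψ R - ψ r :=
    integral_eq_sub_of_hasDerivAt_of_le hrR hψ hderiv (hg.intervalIntegrable_of_Icc hrR)
  refine sq_le_mul_of_forall_two_mul_le (norm_nonneg _) hF
    (mul_nonneg hW (sub_nonneg.2 (one_div_le_one_div_of_le hr hrR))) fun t ht => ?_
  have hG : IntervalIntegrable (fun s : ℝ => W / s ^ 2 / t) volume r R :=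
    ContinuousOn.intervalIntegrable_of_Icc hrR
      ((continuousOn_const.div (continuousOn_pow 2) fun s hs =>
        pow_ne_zero 2 (hpos s hs).ne').div_const t)
  calc 2 * ‖ψ r‖ = 2 * ‖∫ s in r..R, g s‖ := by rw [hftc, hψR, zero_sub, norm_neg]
    _ ≤ 2 * ∫ s in r..R, ‖g s‖ := by gcongr; exact norm_integral_le_integral_norm hrR
    _ = ∫ s in r..R, 2 * ‖g s‖ := (intervalIntegral.integral_const_mul _ _).symm
    _ ≤ ∫ s in r..R, (t * F s + W / s ^ 2 / t) :=
        integral_mono_on hrR ((hg.norm.intervalIntegrable_of_Icc hrR).const_mul 2)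
          (hFint.const_mul t |>.add hG) fun s hs =>
            two_mul_le_mul_add_div (hpos s hs) (hw s hs).1 (hw s hs).2 ht
    _ = t * (∫ s in r..R, F s) + W * (1 / r - 1 / R) / t := by
        rw [integral_add (hFint.const_mul t) hG, intervalIntegral.integral_const_mul,
          intervalIntegral.integral_div, integral_const_div_sq hr hrR]

end Hardy

section RadialBounds

variable {E : Type*} [NormedAddCommGroup E] [NormedSpace ℝ E] [CompleteSpace E]
  {R ρO : ℝ} {ρ : ℝ → ℝ} {ψ : ℝ → E}

lemma norm_sq_mul_sq_le_weightedDirichletEnergy (hR : 0 < R) (hψ : ContDiffOn ℝ 1 ψ (Icc 0 R))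
    (hψR : ψ R = 0) (hρc : ContinuousOn ρ (Icc 0 R))
    (hρ : ∀ r ∈ Icc (0 : ℝ) R, 0 < ρ r ∧ ρ r ≤ ρO) {r : ℝ} (hr : r ∈ Icc 0 R) :
    ‖ψ r‖ ^ 2 * r ^ 2 ≤ weightedDirichletEnergy ρ R ψ * ρO * (r - r ^ 2 / R) := by
  obtain ⟨hr0, hrR⟩ := hr
  rcases hr0.eq_or_lt with rfl | hr0
  · simp
  have hsub : Icc r R ⊆ Icc 0 R := Icc_subset_Icc_left hr0.le
  have hg : ContinuousOn (derivWithin ψ (Icc 0 R)) (Icc 0 R) :=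
    hψ.continuousOn_derivWithin (uniqueDiffOn_Icc hR) le_rfl
  have hderiv : ∀ x ∈ Ioo r R, HasDerivAt ψ (derivWithin ψ (Icc 0 R) x) x := fun x hx =>
    (hψ.differentiableOn one_ne_zero x ⟨(hr0.trans hx.1).le, hx.2.le⟩).hasDerivWithinAt
      |>.hasDerivAt (Icc_mem_nhds (hr0.trans hx.1) hx.2)
  have hHardy := norm_sq_le_integral_mul_of_eq_zero hr0 hrR (hψ.continuousOn.mono hsub) hderiv
    (hg.mono hsub) (hρc.mono hsub) (fun s hs => hρ s (hsub hs)) hψR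
  have hρO : 0 ≤ ρO * (1 / r - 1 / R) :=
    mul_nonneg ((hρ R ⟨hR.le, le_rfl⟩).1.le.trans (hρ R ⟨hR.le, le_rfl⟩).2)
      (sub_nonneg.2 (one_div_le_one_div_of_le hr0 hrR))
  have hmono : ∫ s in r..R, 1 / ρ s * ‖derivWithin ψ (Icc 0 R) s‖ ^ 2 * s ^ 2
      ≤ weightedDirichletEnergy ρ R ψ := by
    refine integral_mono_interval hr0.le hrR le_rfl
      (ae_restrict_of_forall_mem measurableSet_Ioc fun s hs => ?_)
      (ContinuousOn.intervalIntegrable_of_Icc hR.le ?_)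
    · have := (hρ s (Ioc_subset_Icc_self hs)).1
      positivity
    · exact ((continuousOn_const.div hρc fun s hs => (hρ s hs).1.ne').mul (hg.norm.pow 2)).mul
        (continuousOn_pow 2)
  calc ‖ψ r‖ ^ 2 * r ^ 2
      ≤ (weightedDirichletEnergy ρ R ψ * (ρO * (1 / r - 1 / R))) * r ^ 2 := by
        gcongr
        exact hHardy.trans (mul_le_mul_of_nonneg_right hmono hρO)
    _ = weightedDirichletEnergy ρ R ψ * ρO * (r - r ^ 2 / R) := by field_simp

lemma radialMass_le_weightedDirichletEnergy (hR : 0 < R) (hψ : ContDiffOn ℝ 1 ψ (Icc 0 R))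
    (hψR : ψ R = 0) (hρc : ContinuousOn ρ (Icc 0 R))
    (hρ : ∀ r ∈ Icc (0 : ℝ) R, 0 < ρ r ∧ ρ r ≤ ρO) :
    radialMass R ψ ≤ weightedDirichletEnergy ρ R ψ * ρO * R ^ 2 / 6 := by
  have hpoly : ∫ r in (0 : ℝ)..R, weightedDirichletEnergy ρ R ψ * ρO * (r - r ^ 2 / R)
      = weightedDirichletEnergy ρ R ψ * ρO * R ^ 2 / 6 := by
    rw [intervalIntegral.integral_const_mul, integral_sub intervalIntegrable_id
      (((continuous_pow 2).div_const R).intervalIntegrable 0 R), intervalIntegral.integral_div,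
      integral_id, integral_pow]
    field_simp
    ring
  rw [← hpoly]
  refine integral_mono_on hR.le ?_ (Continuous.intervalIntegrable (by fun_prop) 0 R)
    fun r hr => norm_sq_mul_sq_le_weightedDirichletEnergy hR hψ hψR hρc hρ hr
  exact ((hψ.continuousOn.norm.pow 2).mul (continuousOn_pow 2)).intervalIntegrable_of_Icc hR.le

lemma div_le_weightedDirichletEnergy_div_radialMass (hR : 0 < R)
    (hψ : ContDiffOn ℝ 1 ψ (Icc 0 R)) (hψR : ψ R = 0) (hρc : ContinuousOn ρ (Icc 0 R))
    (hρ : ∀ r ∈ Icc (0 : ℝ) R, 0 < ρ r ∧ ρ r ≤ ρO) (hmass : radialMass R ψ ≠ 0) :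
    6 / (ρO * R ^ 2) ≤ weightedDirichletEnergy ρ R ψ / radialMass R ψ := by
  have hρO : 0 < ρO := (hρ 0 ⟨le_rfl, hR.le⟩).1.trans_le (hρ 0 ⟨le_rfl, hR.le⟩).2
  have hmass_pos : 0 < radialMass R ψ :=
    (integral_nonneg hR.le fun r _ => by positivity).lt_of_ne' hmass
  rw [div_le_div_iff₀ (by positivity) hmass_pos]
  linarith [radialMass_le_weightedDirichletEnergy hR hψ hψR hρc hρ]

end RadialBounds

lemma rayleighQuotients_nonempty {R M : ℝ} (hR : 0 < R) (hM : 0 < M) (ρ : ℝ → ℝ) :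
    (rayleighQuotients R M ρ).Nonempty := by
  set ψ : ℝ → ℂ := fun r => ((M / R * (R - r) : ℝ) : ℂ)
  have hψ_norm : ∀ r ∈ Icc (0 : ℝ) R, ‖ψ r‖ = M / R * (R - r) := fun r hr => by
    rw [Complex.norm_real, Real.norm_of_nonneg (mul_nonneg (by positivity) (by linarith [hr.2]))]
  have hψ_cont : Continuous ψ := Complex.continuous_ofReal.comp (by fun_prop)
  refine ⟨_, ψ, (Complex.ofRealCLM.contDiff.comp
    (contDiff_const.mul (contDiff_const.sub contDiff_id))).contDiffOn, by simp [ψ],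
    fun r hr => ?_, ?_, rfl⟩
  · rw [hψ_norm r hr]
    calc M / R * (R - r) ≤ M / R * R := by gcongr; linarith [hr.1]
      _ = M := div_mul_cancel₀ M hR.ne'
  · refine (intervalIntegral_pos_of_pos_on
      ((by fun_prop : Continuous fun r => ‖ψ r‖ ^ 2 * r ^ 2).intervalIntegrable 0 R)
      (fun r hr => ?_) hR).ne'
    rw [hψ_norm r (Ioo_subset_Icc_self hr)]
    have : 0 < R - r := by linarith [hr.2]
    have := hr.1
    positivity

theorem stmt13_general (R ρO M : ℝ) (hR : 0 < R) (hM : 0 < M)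
    (ρ : ℝ → ℝ) (hρc : ContinuousOn ρ (Icc 0 R))
    (hρ : ∀ r ∈ Icc (0 : ℝ) R, 0 < ρ r ∧ ρ r ≤ ρO) :
    0 < sInf { q : ℝ | ∃ ψ : ℝ → ℂ,
      ContDiffOn ℝ 1 ψ (Icc 0 R) ∧
      ψ R = 0 ∧
      (∀ r ∈ Icc (0 : ℝ) R, ‖ψ r‖ ≤ M) ∧
      (∫ r in (0 : ℝ)..R, ‖ψ r‖ ^ 2 * r ^ 2) ≠ 0 ∧
      q = (∫ r in (0 : ℝ)..R, (1 / ρ r) * ‖derivWithin ψ (Icc 0 R) r‖ ^ 2 * r ^ 2) /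
          (∫ r in (0 : ℝ)..R, ‖ψ r‖ ^ 2 * r ^ 2) } := by
  show 0 < sInf (rayleighQuotients R M ρ)
  have hρO : 0 < ρO := (hρ 0 ⟨le_rfl, hR.le⟩).1.trans_le (hρ 0 ⟨le_rfl, hR.le⟩).2
  refine (by positivity : 0 < 6 / (ρO * R ^ 2)).trans_le
    (le_csInf (rayleighQuotients_nonempty hR hM ρ) ?_)
  rintro q ⟨ψ, hψ, hψR, -, hmass, rfl⟩
  exact div_le_weightedDirichletEnergy_div_radialMass hR hψ hψR hρc hρ hmass

/-- for continuous `ρ : [0,R] → (0, ρ_O]` and fixed `M > 0`, the infimum `μ`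
over the class `F = {ψ ∈ C¹[0,R] : ψ(R) = 0, |ψ| ≤ M, ψ ≢ 0}` of the Rayleigh quotient
`[∫₀ᴿ (1/ρ)|ψ'|² r² dr] / [∫₀ᴿ |ψ|² r² dr]` is strictly positive. -/
theorem stmt13 (R ρO M : ℝ) (hR : 0 < R) (hρO : 0 < ρO) (hM : 0 < M)
    (ρ : ℝ → ℝ) (hρc : ContinuousOn ρ (Icc 0 R))
    (hρ : ∀ r ∈ Icc (0 : ℝ) R, 0 < ρ r ∧ ρ r ≤ ρO) :
    0 < sInf { q : ℝ | ∃ ψ : ℝ → ℂ,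
      ContDiffOn ℝ 1 ψ (Icc 0 R) ∧
      ψ R = 0 ∧
      (∀ r ∈ Icc (0 : ℝ) R, ‖ψ r‖ ≤ M) ∧
      (∫ r in (0 : ℝ)..R, ‖ψ r‖ ^ 2 * r ^ 2) ≠ 0 ∧
      q = (∫ r in (0 : ℝ)..R, (1 / ρ r) * ‖derivWithin ψ (Icc 0 R) r‖ ^ 2 * r ^ 2) /
          (∫ r in (0 : ℝ)..R, ‖ψ r‖ ^ 2 * r ^ 2) } :=
  stmt13_general R ρO M hR hM ρ hρc hρ
end

section
/- Let Ω, ρ, P be as in an admissible stationary solution with generalized Schwarzschild discriminant 𝒜 (so that 𝔞 = −𝒜 n with n = grad ρ/‖grad ρ‖), and let ε > 0. If −ε ‖grad ρ‖²/ρ ≤ 𝒜 ≤ 0 on Ω, then for all u ∈ D(L), (L u | u)_𝔥 ≥ (1 − ε) ∫_Ω (γP/ρ²)|g|² dx − 4πG ∫_Ω K[g] g* dx, where g = div(ρu). -/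
open MeasureTheory Set

noncomputable section

/-- The Newtonian potential operator `K[g](x) = (1/4π) ∫_Ω g(x')/‖x−x'‖ dx'`. -/
def newtonK (Ω : Set (EuclideanSpace ℝ (Fin 3))) (g : EuclideanSpace ℝ (Fin 3) → ℂ)
    (x : EuclideanSpace ℝ (Fin 3)) : ℂ :=
  (1 / (4 * Real.pi) : ℝ) • ∫ y in Ω, g y / (‖x - y‖ : ℂ)

/-- The divergence `g = div(ρ u)` of the (complex) vector field `ρ u`. -/
def divRhoU (ρ : EuclideanSpace ℝ (Fin 3) → ℝ)
    (u : EuclideanSpace ℝ (Fin 3) → EuclideanSpace ℂ (Fin 3))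
    (x : EuclideanSpace ℝ (Fin 3)) : ℂ :=
  ∑ i : Fin 3, fderiv ℝ (fun y => (ρ y : ℂ) * u y i) x (EuclideanSpace.single i 1)

/-- The component `(u|n)` of `u` along the unit vector `n = grad ρ / ‖grad ρ‖`. -/
def uDotN (ρ : EuclideanSpace ℝ (Fin 3) → ℝ)
    (u : EuclideanSpace ℝ (Fin 3) → EuclideanSpace ℂ (Fin 3))
    (x : EuclideanSpace ℝ (Fin 3)) : ℂ :=
  ∑ i : Fin 3, u x i * ((gradient ρ x i / ‖gradient ρ x‖ : ℝ) : ℂ)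

lemma ptwise {p ρx A ε h zn wn r : ℝ} (hp : 0 < p) (hρ : 0 < ρx) (hε : 0 < ε)
    (hA1 : -ε * h ^ 2 / ρx ≤ A) (hA2 : A ≤ 0)
    (hr : |r| ≤ zn * wn) :
    0 ≤ ε * (p / ρx ^ 2 * wn ^ 2) + 2 * (p * A / ρx * r) - p * A / ρx * h ^ 2 * zn ^ 2 := by
  have hA1' : -ε * h ^ 2 ≤ A * ρx := by
    rw [div_le_iff₀ hρ] at hA1; linarith
  have h3 : A * (zn * wn) ≤ A * r :=
    mul_le_mul_of_nonpos_left ((le_abs_self r).trans hr) hA2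
  have inner : 0 ≤ ε * wn ^ 2 + 2 * (A * ρx) * r - (A * ρx) * h ^ 2 * zn ^ 2 := by
    nlinarith [sq_nonneg (ε * wn + ρx * A * zn),
      mul_nonneg (by linarith : (0:ℝ) ≤ A * ρx + ε * h ^ 2)
        (mul_nonneg (mul_nonneg (neg_nonneg.2 hA2) hρ.le) (sq_nonneg zn)),
      mul_nonneg (mul_nonneg hε.le hρ.le) (sub_nonneg.2 h3), hε, hρ]
  have key : 0 ≤ p * (ε * wn ^ 2 + 2 * (A * ρx) * r - (A * ρx) * h ^ 2 * zn ^ 2) :=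
    mul_nonneg hp.le inner
  have heq : ε * (p / ρx ^ 2 * wn ^ 2) + 2 * (p * A / ρx * r) - p * A / ρx * h ^ 2 * zn ^ 2
      = p * (ε * wn ^ 2 + 2 * (A * ρx) * r - (A * ρx) * h ^ 2 * zn ^ 2) / ρx ^ 2 := by
    field_simp
  rw [heq]
  exact div_nonneg key (by positivity)

/-- with `𝔞 = −𝒜 n`, `n = grad ρ/‖grad ρ‖`, and `g = div(ρu)`, if
`−ε ‖grad ρ‖²/ρ ≤ 𝒜 ≤ 0` on `Ω` (`ε > 0`), then the quadratic form of `L` satisfies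
`(Lu|u) ≥ (1 − ε)∫_Ω (γP/ρ²)|g|² dx − 4πG ∫_Ω K[g]g* dx`. -/
theorem stmt15 (Ω : Set (EuclideanSpace ℝ (Fin 3)))
    (hΩopen : IsOpen Ω) (hΩconn : IsConnected Ω) (hΩbdd : Bornology.IsBounded Ω)
    (ρ P 𝒜 : EuclideanSpace ℝ (Fin 3) → ℝ) (γ G ε : ℝ)
    (hγ : 1 < γ ∧ γ < 2) (hG : 0 < G) (hε : 0 < ε)
    (hρpos : ∀ x ∈ Ω, 0 < ρ x) (hPpos : ∀ x ∈ Ω, 0 < P x)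
    (u : EuclideanSpace ℝ (Fin 3) → EuclideanSpace ℂ (Fin 3))
    (hu : ContDiffOn ℝ 1 u Ω)
    (hA : ∀ x ∈ Ω, -ε * ‖gradient ρ x‖ ^ 2 / ρ x ≤ 𝒜 x ∧ 𝒜 x ≤ 0)
    (hint1 : IntegrableOn
      (fun x => γ * P x / (ρ x) ^ 2 * ‖divRhoU ρ u x‖ ^ 2) Ω)
    (hint2 : IntegrableOn
      (fun x => γ * P x * 𝒜 x / ρ x * (uDotN ρ u x * (starRingEnd ℂ) (divRhoU ρ u x))) Ω)
    (hint3 : IntegrableOn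
      (fun x => γ * P x * (𝒜 x) ^ 2 * ‖uDotN ρ u x‖ ^ 2) Ω)
    (hint4 : IntegrableOn
      (fun x => γ * P x * 𝒜 x / ρ x * ‖gradient ρ x‖ ^ 2 * ‖uDotN ρ u x‖ ^ 2) Ω) :
    (1 - ε) * (∫ x in Ω, γ * P x / (ρ x) ^ 2 * ‖divRhoU ρ u x‖ ^ 2) -
      4 * Real.pi * G *
        (∫ x in Ω, newtonK Ω (divRhoU ρ u) x * (starRingEnd ℂ) (divRhoU ρ u x)).re ≤
    (∫ x in Ω, γ * P x / (ρ x) ^ 2 * ‖divRhoU ρ u x‖ ^ 2) +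
      2 * (∫ x in Ω,
        ((γ * P x * 𝒜 x / ρ x : ℝ) : ℂ) *
          (uDotN ρ u x * (starRingEnd ℂ) (divRhoU ρ u x))).re -
      (∫ x in Ω, γ * P x * 𝒜 x / ρ x * ‖gradient ρ x‖ ^ 2 * ‖uDotN ρ u x‖ ^ 2) -
      4 * Real.pi * G *
        (∫ x in Ω, newtonK Ω (divRhoU ρ u) x * (starRingEnd ℂ) (divRhoU ρ u x)).re := by
  classical
  set B : EuclideanSpace ℝ (Fin 3) → ℂ := fun x =>
    ((γ * P x * 𝒜 x / ρ x : ℝ) : ℂ) * (uDotN ρ u x * (starRingEnd ℂ) (divRhoU ρ u x)) with hB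
  have hint2' : IntegrableOn B Ω := by
    have : B = fun x => γ * P x * 𝒜 x / ρ x * (uDotN ρ u x * (starRingEnd ℂ) (divRhoU ρ u x)) := by
      funext x; push_cast [hB]; ring
    rw [this]; exact hint2
  have hre : (∫ x in Ω, B x).re = ∫ x in Ω, (B x).re := by
    simpa using (Complex.reCLM.integral_comp_comm hint2').symm
  set f1 : EuclideanSpace ℝ (Fin 3) → ℝ := fun x => γ * P x / (ρ x) ^ 2 * ‖divRhoU ρ u x‖ ^ 2
  set f3 : EuclideanSpace ℝ (Fin 3) → ℝ :=
    fun x => γ * P x * 𝒜 x / ρ x * ‖gradient ρ x‖ ^ 2 * ‖uDotN ρ u x‖ ^ 2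
  have hf2int : IntegrableOn (fun x => (B x).re) Ω := hint2'.re
  have hsum : ∫ x in Ω, (ε * f1 x + 2 * (B x).re - f3 x)
      = ε * (∫ x in Ω, f1 x) + 2 * (∫ x in Ω, (B x).re) - ∫ x in Ω, f3 x := by
    have h12 : Integrable (fun x => ε * f1 x + 2 * (B x).re) (volume.restrict Ω) := by
      exact (hint1.const_mul ε).add (hf2int.const_mul 2)
    rw [integral_sub h12 hint4,
      integral_add (hint1.const_mul ε) (hf2int.const_mul 2),
      integral_const_mul, integral_const_mul]
  have hnonneg : 0 ≤ ∫ x in Ω, (ε * f1 x + 2 * (B x).re - f3 x) := by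
    apply setIntegral_nonneg hΩopen.measurableSet
    intro x hx
    have hp : 0 < γ * P x := mul_pos (by linarith [hγ.1]) (hPpos x hx)
    have hrb : |(uDotN ρ u x * (starRingEnd ℂ) (divRhoU ρ u x)).re|
        ≤ ‖uDotN ρ u x‖ * ‖divRhoU ρ u x‖ := by
      calc |(uDotN ρ u x * (starRingEnd ℂ) (divRhoU ρ u x)).re|
          ≤ ‖uDotN ρ u x * (starRingEnd ℂ) (divRhoU ρ u x)‖ := Complex.abs_re_le_norm _
        _ = ‖uDotN ρ u x‖ * ‖divRhoU ρ u x‖ := by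
            rw [norm_mul, RCLike.norm_conj]
    have hBre : (B x).re = γ * P x * 𝒜 x / ρ x
        * (uDotN ρ u x * (starRingEnd ℂ) (divRhoU ρ u x)).re := by
      simp [hB, Complex.re_ofReal_mul]
    have := ptwise (p := γ * P x) (ρx := ρ x) (A := 𝒜 x) (ε := ε)
      (h := ‖gradient ρ x‖) (zn := ‖uDotN ρ u x‖) (wn := ‖divRhoU ρ u x‖)
      (r := (uDotN ρ u x * (starRingEnd ℂ) (divRhoU ρ u x)).re)
      hp (hρpos x hx) hε (hA x hx).1 (hA x hx).2 hrb
    simp only [f1, f3, hBre]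
    nlinarith [this]
  rw [hre]
  rw [hsum] at hnonneg
  linarith

end
end

section
/- Let λ > 0 and let φ : (0,∞) → ℂ be a solution of −Δ⁽¹⁾φ = λφ on (R, ∞), where Δ⁽¹⁾w = (1/r²)(r²w')' − (2/r²)w. If φ ∈ L²((R,∞), r²dr), then φ = 0 on (R, ∞). -/
/-!
Substituting `w = r φ` turns the equation into `w'' = q w` with `q r = 2 / r² - λ`, a
decreasing potential that is eventually negative and bounded below by `-λ`. The energy
`E = w'² - q w²` then satisfies `E' = -q' w² ≥ 0`. If `w ≠ 0`, backward uniqueness for the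
ODE makes `(w, w')` nonzero at a point where `q < 0`, so `E` is positive from there on, and
`(w w')' = E + 2 q w² ≥ E - 2 λ w²` together with `∫ w² < ∞` forces `w w' → ∞`. Hence `w²`
eventually grows linearly, contradicting `w ∈ L²`. Complex (or vector) valued `w` reduce
to the real case through continuous linear functionals.
-/

open MeasureTheory Set Filter

section SecondOrderODE

variable {q q' u u' : ℝ → ℝ}

lemma monotoneOn_of_hasDerivAt_nonneg {D : Set ℝ} (hD : Convex ℝ D) {f f' : ℝ → ℝ}
    (hf : ∀ t ∈ D, HasDerivAt f (f' t) t) (hf' : ∀ t ∈ interior D, 0 ≤ f' t) :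
    MonotoneOn f D :=
  monotoneOn_of_hasDerivWithinAt_nonneg hD
    (fun t ht => (hf t ht).continuousAt.continuousWithinAt)
    (fun t ht => (hf t (interior_subset ht)).hasDerivWithinAt) hf'

-- `exp (K t) (u² + u'²)` is nondecreasing as soon as `K ≥ |1 + q|`.
lemma eq_zero_of_hasDerivAt_of_eq_zero_right {a b : ℝ} (hab : a ≤ b)
    (hq : ContinuousOn q (Icc a b)) (hu : ∀ t ∈ Icc a b, HasDerivAt u (u' t) t)
    (hu' : ∀ t ∈ Icc a b, HasDerivAt u' (q t * u t) t) (hb : u b = 0) (hb' : u' b = 0) :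
    u a = 0 := by
  obtain ⟨K, hK⟩ := isCompact_Icc.exists_bound_of_continuousOn
    (f := fun t => 1 + q t) (continuousOn_const.add hq)
  have hmono : MonotoneOn (fun t => Real.exp (K * t) * (u t ^ 2 + u' t ^ 2)) (Icc a b) := by
    refine monotoneOn_of_hasDerivAt_nonneg (convex_Icc a b)
      (f' := fun t => Real.exp (K * t) * (K * (u t ^ 2 + u' t ^ 2) + 2 * (1 + q t) * u t * u' t))
      (fun t ht => ?_) (fun t ht => ?_)
    · refine (((hasDerivAt_id t).const_mul K).exp.fun_mul
        (((hu t ht).fun_pow 2).fun_add ((hu' t ht).fun_pow 2))).congr_deriv ?_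
      simp only [id]
      ring
    · have h1q := abs_le.mp (Real.norm_eq_abs _ ▸ hK t (interior_subset ht))
      have : 0 ≤ K * (u t ^ 2 + u' t ^ 2) + 2 * (1 + q t) * u t * u' t := by
        nlinarith [mul_nonneg (sub_nonneg.mpr h1q.2) (sq_nonneg (u t - u' t)),
          mul_nonneg (neg_le_iff_add_nonneg.mp h1q.1) (sq_nonneg (u t + u' t))]
      positivity
  have hab' := hmono (left_mem_Icc.2 hab) (right_mem_Icc.2 hab) hab
  simp only [hb, hb'] at hab'
  exact pow_eq_zero_iff two_ne_zero |>.mp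
    (by nlinarith [Real.exp_pos (K * a), sq_nonneg (u a), sq_nonneg (u' a)])

def odeEnergy (q u u' : ℝ → ℝ) (t : ℝ) : ℝ := u' t ^ 2 - q t * u t ^ 2

variable {R : ℝ}

lemma monotoneOn_odeEnergy (hq : ∀ t ∈ Ioi R, HasDerivAt q (q' t) t)
    (hq' : ∀ t ∈ Ioi R, q' t ≤ 0) (hu : ∀ t ∈ Ioi R, HasDerivAt u (u' t) t)
    (hu' : ∀ t ∈ Ioi R, HasDerivAt u' (q t * u t) t) :
    MonotoneOn (odeEnergy q u u') (Ioi R) := by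
  refine monotoneOn_of_hasDerivAt_nonneg (convex_Ioi R) (f' := fun t => -q' t * u t ^ 2)
    (fun t ht => ?_) (fun t ht => ?_)
  · refine (((hu' t ht).fun_pow 2).fun_sub ((hq t ht).fun_mul ((hu t ht).fun_pow 2))).congr_deriv ?_
    ring
  · rw [interior_Ioi] at ht
    nlinarith [hq' t ht, sq_nonneg (u t)]

-- `(u u')' = E + 2 q u² ≥ E r - 2 c u²` on `[r, ∞)`, since the energy `E` is nondecreasing.
lemma odeEnergy_mul_sub_le {c : ℝ} (hq : ∀ t ∈ Ioi R, HasDerivAt q (q' t) t)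
    (hq' : ∀ t ∈ Ioi R, q' t ≤ 0) (hqc : ∀ t ∈ Ioi R, -c ≤ q t)
    (hu : ∀ t ∈ Ioi R, HasDerivAt u (u' t) t) (hu' : ∀ t ∈ Ioi R, HasDerivAt u' (q t * u t) t)
    {r t : ℝ} (hr : r ∈ Ioi R) (hrt : r ≤ t) :
    odeEnergy q u u' r * (t - r) - 2 * c * ∫ s in r..t, u s ^ 2 ≤ u t * u' t - u r * u' r := by
  have hsub : Icc r t ⊆ Ioi R := Icc_subset_Ioi_iff hrt |>.mpr hr
  have hu2 : ContinuousOn (fun s => u s ^ 2) (Icc r t) := fun s hs =>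
    ((hu s (hsub hs)).continuousAt.pow 2).continuousWithinAt
  calc odeEnergy q u u' r * (t - r) - 2 * c * ∫ s in r..t, u s ^ 2
      = ∫ s in r..t, (odeEnergy q u u' r - 2 * c * u s ^ 2) := by
        rw [intervalIntegral.integral_sub intervalIntegrable_const
          ((hu2.intervalIntegrable_of_Icc hrt).const_mul _),
          intervalIntegral.integral_const, intervalIntegral.integral_const_mul, smul_eq_mul,
          mul_comm]
    _ ≤ u t * u' t - u r * u' r := by
        refine intervalIntegral.integral_le_sub_of_hasDeriv_right_of_le hrt
          (fun s hs => ((hu s (hsub hs)).mul (hu' s (hsub hs))).continuousAt.continuousWithinAt)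
          (fun s hs => ((hu s (hsub (Ioo_subset_Icc_self hs))).fun_mul
            (hu' s (hsub (Ioo_subset_Icc_self hs)))).hasDerivWithinAt)
          (continuousOn_const.sub (continuousOn_const.mul hu2)).integrableOn_Icc
          fun s hs => ?_
        have hE := monotoneOn_odeEnergy hq hq' hu hu' hr (hsub (Ioo_subset_Icc_self hs)) hs.1.le
        have hqs := hqc s (hsub (Ioo_subset_Icc_self hs))
        simp only [odeEnergy] at hE ⊢
        nlinarith [mul_nonneg (by linarith : 0 ≤ q s + c) (sq_nonneg (u s))]

lemma not_integrableOn_sq_of_one_le_mul {T : ℝ} (hu : ∀ t ∈ Ici T, HasDerivAt u (u' t) t)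
    (h1 : ∀ t ∈ Ici T, 1 ≤ u t * u' t) : ¬ IntegrableOn (fun t => u t ^ 2) (Ioi T) := by
  intro hL2
  have hmono : MonotoneOn (fun t => u t ^ 2 - 2 * t) (Ici T) := by
    refine monotoneOn_of_hasDerivAt_nonneg (convex_Ici T) (f' := fun t => 2 * u t * u' t - 2)
      (fun t ht => ?_) (fun t ht => ?_)
    · refine (((hu t ht).fun_pow 2).fun_sub ((hasDerivAt_id t).const_mul 2)).congr_deriv ?_
      ring
    · linarith [h1 t (interior_subset ht)]
  have hge : ∀ t ∈ Ioi (T + 1), ‖(1 : ℝ)‖ ≤ u t ^ 2 := fun t ht => by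
    have hTt : T ≤ t := by linarith [mem_Ioi.mp ht]
    have := hmono self_mem_Ici hTt hTt
    rw [norm_one]
    nlinarith [sq_nonneg (u T), mem_Ioi.mp ht]
  have h1int : IntegrableOn (fun _ => (1 : ℝ)) (Ioi (T + 1)) :=
    (hL2.mono_set (Ioi_subset_Ioi (by linarith))).mono' aestronglyMeasurable_const
      (ae_restrict_of_forall_mem measurableSet_Ioi hge)
  simp [integrableOn_const_iff, Real.volume_Ioi] at h1int

theorem eqOn_zero_of_integrableOn_sq {c : ℝ} (hq : ∀ t ∈ Ioi R, HasDerivAt q (q' t) t)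
    (hq' : ∀ t ∈ Ioi R, q' t ≤ 0) (hqc : ∀ t ∈ Ioi R, -c ≤ q t) (hneg : ∀ᶠ t in atTop, q t < 0)
    (hu : ∀ t ∈ Ioi R, HasDerivAt u (u' t) t) (hu' : ∀ t ∈ Ioi R, HasDerivAt u' (q t * u t) t)
    (hL2 : IntegrableOn (fun t => u t ^ 2) (Ioi R)) : EqOn u 0 (Ioi R) := by
  intro r₀ hr₀
  by_contra hu₀
  obtain ⟨r₁, hqr₁, hr₀r₁⟩ := (hneg.and (eventually_ge_atTop r₀)).exists
  have hr₁ : r₁ ∈ Ioi R := lt_of_lt_of_le hr₀ hr₀r₁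
  have hdata : u r₁ ≠ 0 ∨ u' r₁ ≠ 0 := by
    by_contra! h
    have hsub : Icc r₀ r₁ ⊆ Ioi R := Icc_subset_Ioi_iff hr₀r₁ |>.mpr hr₀
    exact hu₀ (eq_zero_of_hasDerivAt_of_eq_zero_right hr₀r₁
      (fun t ht => (hq t (hsub ht)).continuousAt.continuousWithinAt)
      (fun t ht => hu t (hsub ht)) (fun t ht => hu' t (hsub ht)) h.1 h.2)
  have he : 0 < odeEnergy q u u' r₁ := by
    unfold odeEnergy
    rcases hdata with h | h
    · nlinarith [sq_nonneg (u' r₁), pow_pos (abs_pos.mpr h) 2, sq_abs (u r₁)]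
    · nlinarith [pow_pos (abs_pos.mpr h) 2, sq_abs (u' r₁), sq_nonneg (u r₁)]
  have hc : 0 ≤ c := by linarith [hqc r₁ hr₁]
  set M := ∫ t in Ioi R, u t ^ 2
  have hM : 0 ≤ M := setIntegral_nonneg measurableSet_Ioi fun t _ => sq_nonneg (u t)
  set T := r₁ + (1 + |u r₁ * u' r₁| + 2 * c * M) / odeEnergy q u u' r₁
  have hET : odeEnergy q u u' r₁ * (T - r₁) = 1 + |u r₁ * u' r₁| + 2 * c * M := by
    simp only [T]
    field_simp
    ring
  have hr₁T : r₁ ≤ T := le_add_of_nonneg_right (by positivity)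
  refine not_integrableOn_sq_of_one_le_mul (T := T) (fun t ht => hu t (hr₁.trans_le
    (hr₁T.trans ht))) (fun t ht => ?_) (hL2.mono_set (Ioi_subset_Ioi (hr₁.le.trans hr₁T)))
  have hr₁t : r₁ ≤ t := hr₁T.trans ht
  have hint : ∫ s in r₁..t, u s ^ 2 ≤ M := by
    rw [intervalIntegral.integral_of_le hr₁t]
    exact setIntegral_mono_set hL2 (ae_of_all _ fun s => sq_nonneg _)
      (Ioc_subset_Ioi_self.trans (Ioi_subset_Ioi hr₁.le)).eventuallyLE
  have hgrow := odeEnergy_mul_sub_le hq hq' hqc hu hu' hr₁ hr₁t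
  have hTt : odeEnergy q u u' r₁ * (T - r₁) ≤ odeEnergy q u u' r₁ * (t - r₁) := by gcongr; exact ht
  nlinarith [neg_abs_le (u r₁ * u' r₁)]

end SecondOrderODE

theorem eqOn_zero_of_integrableOn_norm_sq {E : Type*} [NormedAddCommGroup E] [NormedSpace ℝ E]
    {R c : ℝ} {q q' : ℝ → ℝ} {w w' : ℝ → E} (hq : ∀ t ∈ Ioi R, HasDerivAt q (q' t) t)
    (hq' : ∀ t ∈ Ioi R, q' t ≤ 0) (hqc : ∀ t ∈ Ioi R, -c ≤ q t)
    (hneg : ∀ᶠ t in atTop, q t < 0) (hw : ∀ t ∈ Ioi R, HasDerivAt w (w' t) t)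
    (hw' : ∀ t ∈ Ioi R, HasDerivAt w' (q t • w t) t)
    (hL2 : IntegrableOn (fun t => ‖w t‖ ^ 2) (Ioi R)) : EqOn w 0 (Ioi R) := by
  intro t ht
  refine SeparatingDual.eq_zero_of_forall_dual_eq_zero (R := ℝ) fun ℓ => ?_
  refine eqOn_zero_of_integrableOn_sq (u := fun s => ℓ (w s)) (u' := fun s => ℓ (w' s))
    hq hq' hqc hneg (fun s hs => ℓ.hasFDerivAt.comp_hasDerivAt s (hw s hs))
    (fun s hs => (ℓ.hasFDerivAt.comp_hasDerivAt s (hw' s hs)).congr_deriv (map_smul ℓ _ _)) ?_ ht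
  refine (hL2.const_mul (‖ℓ‖ ^ 2)).mono' ?_ (ae_restrict_of_forall_mem measurableSet_Ioi
    fun s _ => ?_)
  · exact ContinuousOn.aestronglyMeasurable (fun s hs =>
      ((ℓ.continuous.continuousAt.comp (hw s hs).continuousAt).pow 2).continuousWithinAt)
      measurableSet_Ioi
  · rw [norm_pow, ← mul_pow]
    gcongr
    exact ℓ.le_opNorm _

section RadialEquation

variable {φ : ℝ → ℂ} {r : ℝ}

lemma hasDerivAt_ofReal (r : ℝ) : HasDerivAt (fun s : ℝ => (s : ℂ)) 1 r := by
  simpa using (hasDerivAt_id r).ofReal_comp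

lemma hasDerivAt_sq_mul_deriv_of_radial {lam : ℝ} (hr : r ≠ 0)
    (hd : DifferentiableAt ℝ (fun s : ℝ => (s ^ 2 : ℂ) * deriv φ s) r)
    (hode : -((1 / (r ^ 2 : ℂ)) * deriv (fun s : ℝ => (s ^ 2 : ℂ) * deriv φ s) r -
      (2 / (r ^ 2 : ℂ)) * φ r) = (lam : ℂ) * φ r) :
    HasDerivAt (fun s : ℝ => (s ^ 2 : ℂ) * deriv φ s) ((2 - lam * r ^ 2) * φ r) r := by
  have hr' : (r : ℂ) ≠ 0 := Complex.ofReal_ne_zero.mpr hr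
  have hderiv : deriv (fun s : ℝ => (s ^ 2 : ℂ) * deriv φ s) r = (2 - lam * r ^ 2) * φ r := by
    field_simp at hode
    linear_combination -hode
  exact hderiv ▸ hd.hasDerivAt

lemma hasDerivAt_ofReal_mul (hr : r ≠ 0) (hd : DifferentiableAt ℝ φ r) :
    HasDerivAt (fun s : ℝ => (s : ℂ) * φ s) (φ r + (r ^ 2 : ℂ) * deriv φ r / r) r := by
  have hr' : (r : ℂ) ≠ 0 := Complex.ofReal_ne_zero.mpr hr
  refine ((hasDerivAt_ofReal r).fun_mul hd.hasDerivAt).congr_deriv ?_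
  field_simp

lemma hasDerivAt_add_sq_mul_deriv_div_of_radial {lam : ℝ} (hr : r ≠ 0)
    (hd : DifferentiableAt ℝ φ r)
    (hg : HasDerivAt (fun s : ℝ => (s ^ 2 : ℂ) * deriv φ s) ((2 - lam * r ^ 2) * φ r) r) :
    HasDerivAt (fun s : ℝ => φ s + (s ^ 2 : ℂ) * deriv φ s / s)
      ((2 / r ^ 2 - lam : ℝ) • ((r : ℂ) * φ r)) r := by
  have hr' : (r : ℂ) ≠ 0 := Complex.ofReal_ne_zero.mpr hr
  refine (hd.hasDerivAt.fun_add (hg.div (hasDerivAt_ofReal r) hr')).congr_deriv ?_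
  rw [Complex.real_smul]
  push_cast
  field_simp
  ring

end RadialEquation

lemma hasDerivAt_two_div_sq_sub {t : ℝ} (lam : ℝ) (ht : t ≠ 0) :
    HasDerivAt (fun t : ℝ => 2 / t ^ 2 - lam) (-(4 / t ^ 3)) t :=
  (((hasDerivAt_const t (2 : ℝ)).div (hasDerivAt_pow 2 t) (by positivity)).sub_const
    lam).congr_deriv (by field_simp; ring)

/-- if `λ > 0` and `φ` solves `−Δ⁽¹⁾φ = λφ` on `(R,∞)`, where
`Δ⁽¹⁾w = (1/r²)(r²w')' − (2/r²)w`, and `φ ∈ L²((R,∞), r²dr)`, then `φ = 0` on `(R,∞)`. -/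
theorem stmt16 (R lam : ℝ) (hR : 0 < R) (hlam : 0 < lam) (φ : ℝ → ℂ)
    (hd1 : ∀ r ∈ Ioi R, DifferentiableAt ℝ φ r)
    (hd2 : ∀ r ∈ Ioi R, DifferentiableAt ℝ (fun s : ℝ => (s ^ 2 : ℂ) * deriv φ s) r)
    (hode : ∀ r ∈ Ioi R,
      -((1 / (r ^ 2 : ℂ)) * deriv (fun s : ℝ => (s ^ 2 : ℂ) * deriv φ s) r -
          (2 / (r ^ 2 : ℂ)) * φ r) = (lam : ℂ) * φ r)
    (hL2 : Integrable (fun r => ‖φ r‖ ^ 2 * r ^ 2) (volume.restrict (Ioi R))) :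
    EqOn φ 0 (Ioi R) := by
  have hr0 : ∀ r ∈ Ioi R, r ≠ 0 := fun r hr => (hR.trans hr).ne'
  have hq_neg : ∀ᶠ t in atTop, 2 / t ^ 2 - lam < 0 :=
    ((tendsto_const_nhds.div_atTop (tendsto_pow_atTop two_ne_zero)).sub_const
      lam).eventually_lt_const (by linarith)
  have hw_zero := eqOn_zero_of_integrableOn_norm_sq (c := lam)
    (fun t ht => hasDerivAt_two_div_sq_sub lam (hr0 t ht))
    (fun t ht => neg_nonpos.mpr (by have := hR.trans ht; positivity))
    (fun t _ => by linarith [show 0 ≤ 2 / t ^ 2 by positivity]) hq_neg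
    (fun r hr => hasDerivAt_ofReal_mul (hr0 r hr) (hd1 r hr))
    (fun r hr => hasDerivAt_add_sq_mul_deriv_div_of_radial (hr0 r hr) (hd1 r hr)
      (hasDerivAt_sq_mul_deriv_of_radial (hr0 r hr) (hd2 r hr) (hode r hr)))
    (by simpa [IntegrableOn, norm_mul, mul_pow, mul_comm] using hL2)
  intro r hr
  simpa [hr0 r hr] using hw_zero hr
end
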